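/- Let G' be the spanner instance constructed from a Min-Rep instance with parameters k ≥ 3, k_A = ⌊(k−1)/2⌋, k_B = ⌈(k−1)/2⌉ and x = n²/ñ, where n is the number of vertices of the Min-Rep graph and ñ the number of supervertices. Then for every REP-cover C of the Min-Rep instance with |C| ≥ ñ, there exists a k-spanner H of G' with at most (k+1)·x·|C| edges. -/

import Mathlib

/-- Vertices of the spanner instance: original Min-Rep vertices `(A × SA) ⊕ (B × SB)`,
plus the path vertices `S = A × [k_A] × [x]` and `T = B × [k_B] × [x]`. -/
abbrev SpV (A B SA SB : Type) (kA kB x : ℕ) : Type :=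
  ((A × SA) ⊕ (B × SB)) ⊕ ((A × Fin kA × Fin x) ⊕ (B × Fin kB × Fin x))

/-- The defining relation of the spanner instance `G'` (to be symmetrized):
Min-Rep edges `E`, path edges `E_M`, attachment edges `E_{sA}`, `E_{tB}` and
supergraph copies `E_{G̃}`. -/
def spRel {A B SA SB : Type} (Et : Finset (A × B)) (π : A × B → Finset (SA × SB))
    (kA kB x : ℕ) :
    SpV A B SA SB kA kB x → SpV A B SA SB kA kB x → Prop
  -- E : Min-Rep edges
  | Sum.inl (Sum.inl (i, α)), Sum.inl (Sum.inr (j, β)) =>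
      (i, j) ∈ Et ∧ (α, β) ∈ π (i, j)
  -- E_M on the S side
  | Sum.inr (Sum.inl (i, jj, p)), Sum.inr (Sum.inl (i', jj', p')) =>
      i = i' ∧ p = p' ∧ (jj' : ℕ) = (jj : ℕ) + 1
  -- E_M on the T side
  | Sum.inr (Sum.inr (j, jj, p)), Sum.inr (Sum.inr (j', jj', p')) =>
      j = j' ∧ p = p' ∧ (jj' : ℕ) = (jj : ℕ) + 1
  -- E_{sA} : s^p_{i,1} to (i, α)
  | Sum.inr (Sum.inl (i, jj, _)), Sum.inl (Sum.inl (i', _)) =>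
      i = i' ∧ (jj : ℕ) = 0
  -- E_{tB} : (j, β) to t^p_{j,1}
  | Sum.inl (Sum.inr (j, _)), Sum.inr (Sum.inr (j', jj, _)) =>
      j = j' ∧ (jj : ℕ) = 0
  -- E_{G̃} : s^p_{i,k_A} to t^p_{j,k_B} for superedges (i,j)
  | Sum.inr (Sum.inl (i, jj, p)), Sum.inr (Sum.inr (j, jj', p')) =>
      (i, j) ∈ Et ∧ p = p' ∧ (jj : ℕ) = kA - 1 ∧ (jj' : ℕ) = kB - 1
  | _, _ => False

/-- The spanner instance `G'`. -/
def spGraph {A B SA SB : Type} (Et : Finset (A × B)) (π : A × B → Finset (SA × SB))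
    (kA kB x : ℕ) : SimpleGraph (SpV A B SA SB kA kB x) :=
  SimpleGraph.fromRel (spRel Et π kA kB x)

/-- `H` contains a canonical path for the `E_{G̃}` edge indexed by `(i, j, p)`:
`s^p_{i,k_A}, …, s^p_{i,1}, (i,α), (j,β), t^p_{j,1}, …, t^p_{j,k_B}`
for some `(α, β) ∈ π (i,j)`. -/
def HasCanonicalPath {A B SA SB : Type} (π : A × B → Finset (SA × SB))
    {kA kB x : ℕ} (hkA : 0 < kA) (hkB : 0 < kB)
    (H : SimpleGraph (SpV A B SA SB kA kB x)) (i : A) (j : B) (p : Fin x) : Prop :=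
  ∃ (α : SA) (β : SB), (α, β) ∈ π (i, j) ∧
    (∀ (m : ℕ) (hm : m + 1 < kA),
      H.Adj (Sum.inr (Sum.inl (i, ⟨m, Nat.lt_of_succ_lt hm⟩, p)))
            (Sum.inr (Sum.inl (i, ⟨m + 1, hm⟩, p)))) ∧
    H.Adj (Sum.inr (Sum.inl (i, ⟨0, hkA⟩, p))) (Sum.inl (Sum.inl (i, α))) ∧
    H.Adj (Sum.inl (Sum.inl (i, α))) (Sum.inl (Sum.inr (j, β))) ∧
    H.Adj (Sum.inl (Sum.inr (j, β))) (Sum.inr (Sum.inr (j, ⟨0, hkB⟩, p))) ∧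
    (∀ (m : ℕ) (hm : m + 1 < kB),
      H.Adj (Sum.inr (Sum.inr (j, ⟨m, Nat.lt_of_succ_lt hm⟩, p)))
            (Sum.inr (Sum.inr (j, ⟨m + 1, hm⟩, p))))

/-- `H` is a `k`-spanner of `G`: a subgraph in which the endpoints of every edge of `G`
are joined by a path of length at most `k`. -/
def IsKSpanner {V : Type} (H G : SimpleGraph V) (k : ℕ) : Prop :=
  H ≤ G ∧ ∀ u v : V, G.Adj u v → ∃ q : H.Walk u v, q.length ≤ k

/-- A REP-cover of a Min-Rep instance with superedges `Et` and relations `π`. -/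
def RepCover {A B SA SB : Type}
    (Et : Finset (A × B)) (π : A × B → Finset (SA × SB))
    (C : Finset ((A × SA) ⊕ (B × SB))) : Prop :=
  ∀ f ∈ Et, ∃ (α : SA) (β : SB),
    Sum.inl (f.1, α) ∈ C ∧ Sum.inr (f.2, β) ∈ C ∧ (α, β) ∈ π f

/-- The supergraph, as a simple graph on `A ⊕ B`. -/
def superGraph {A B : Type} (Et : Finset (A × B)) : SimpleGraph (A ⊕ B) :=
  SimpleGraph.fromRel fun u v => ∃ i j, u = Sum.inl i ∧ v = Sum.inr j ∧ (i, j) ∈ Et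

/-!
The spanner keeps every Min-Rep edge, every path edge of `E_M`, and the attachment edges that
join copy `0` of each path to all Min-Rep vertices, or any copy to a vertex of `R = C ∪ D`, where
`D` holds one vertex of each supervertex. An edge `(s^p_{i,k_A}, t^p_{j,k_B})` of `E_G̃` is spanned
by running down the `s`-path, across the edge `((i,α), (j,β))` supplied by the REP-cover, and up
the `t`-path, i.e. by `k_A + k_B + 1 = k` edges; an attachment edge `(s^p_{i,1}, (i,α))` by the
detour `s^p_{i,1}, (i,α'), s^0_{i,1}, (i,α)` through the representative `(i,α') ∈ D`.

The paths contribute at most `(k-3)·x·|C|/2` edges, the attachments `(|C| + ñ)·x + n`, and the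
Min-Rep edges at most `n²/4`. As `x = ⌊n²/ñ⌋ ≥ 1` gives `n ≤ ñ·x` and `n² ≤ 2ñ·x`, the total
is at most `(k+1)·x·|C|`.
-/

theorem Set.ncard_range_le {α ι : Type*} [Finite ι] (f : ι → α) :
    (Set.range f).ncard ≤ Nat.card ι := by
  rw [← Set.image_univ]
  exact (Set.ncard_image_le (Set.toFinite _)).trans (Set.ncard_univ ι).le

theorem exists_finset_card_le_forall_exists_map_eq {V W : Type*} [Finite W] (f : V → W) :
    ∃ D : Finset V, D.card ≤ Nat.card W ∧ ∀ v, ∃ w ∈ D, f w = f v := by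
  obtain ⟨u, hu, hinj⟩ := Set.exists_image_eq_and_injOn Set.univ f
  have hfin : u.Finite := Set.Finite.of_finite_image (Set.toFinite _) hinj
  refine ⟨hfin.toFinset, ?_, fun v => ?_⟩
  · rw [← Set.ncard_eq_toFinset_card _ hfin, ← hinj.ncard_image]
    exact Set.ncard_le_card _
  · obtain ⟨w, hw, hwv⟩ : f v ∈ f '' u := hu ▸ Set.mem_image_of_mem f (Set.mem_univ v)
    exact ⟨w, hfin.mem_toFinset.2 hw, hwv⟩

theorem sq_le_two_mul_mul_div {n m : ℕ} (h : 1 ≤ n ^ 2 / m) : n ^ 2 ≤ 2 * (m * (n ^ 2 / m)) := by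
  have hm : 0 < m := Nat.pos_of_ne_zero fun h0 => by simp [h0] at h
  have := Nat.lt_mul_div_succ (n ^ 2) hm
  nlinarith

theorem le_mul_div_of_one_le_sq_div {n m : ℕ} (h : 1 ≤ n ^ 2 / m) : n ≤ m * (n ^ 2 / m) := by
  have hsq := sq_le_two_mul_mul_div h
  rcases le_or_gt n 1 with hn | hn
  · have hm : 0 < m := Nat.pos_of_ne_zero fun h0 => by simp [h0] at h
    nlinarith
  · nlinarith

theorem RepCover.mono {A B SA SB : Type} {Et : Finset (A × B)} {π : A × B → Finset (SA × SB)}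
    {C C' : Finset ((A × SA) ⊕ (B × SB))} (hC : RepCover Et π C) (h : C ⊆ C') :
    RepCover Et π C' := fun f hf =>
  (hC f hf).imp fun _ => .imp fun _ ⟨hα, hβ, hαβ⟩ => ⟨h hα, h hβ, hαβ⟩

theorem exists_finset_meets_every_supervertex (A B SA SB : Type) [Finite A] [Finite B] :
    ∃ D : Finset ((A × SA) ⊕ (B × SB)), D.card ≤ Nat.card A + Nat.card B ∧
      (Nonempty SA → ∀ i : A, ∃ α, .inl (i, α) ∈ D) ∧
      (Nonempty SB → ∀ j : B, ∃ β, .inr (j, β) ∈ D) := by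
  obtain ⟨D, hcard, hD⟩ := exists_finset_card_le_forall_exists_map_eq
    (Sum.map (Prod.fst : A × SA → A) (Prod.fst : B × SB → B))
  refine ⟨D, by simpa using hcard, fun ⟨α⟩ i => ?_, fun ⟨β⟩ j => ?_⟩
  · obtain ⟨(⟨i', α'⟩ | ⟨j', β'⟩), hw, hwv⟩ := hD (.inl (i, α)) <;> simp only [Sum.map_inl,
      Sum.map_inr, Sum.inl.injEq, reduceCtorEq] at hwv
    exact ⟨α', hwv ▸ hw⟩
  · obtain ⟨(⟨i', α'⟩ | ⟨j', β'⟩), hw, hwv⟩ := hD (.inr (j, β)) <;> simp only [Sum.map_inl,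
      Sum.map_inr, Sum.inr.injEq, reduceCtorEq] at hwv
    exact ⟨β', hwv ▸ hw⟩

namespace SpV

variable {A B SA SB : Type} {kA kB x : ℕ}

-- `SpV.s i m p` is the paper's `s^p_{i,m+1}`: path positions are counted from `0`.
abbrev s (i : A) (m : Fin kA) (p : Fin x) : SpV A B SA SB kA kB x := .inr (.inl (i, m, p))

abbrev t (j : B) (m : Fin kB) (p : Fin x) : SpV A B SA SB kA kB x := .inr (.inr (j, m, p))

abbrev ofA (i : A) (α : SA) : SpV A B SA SB kA kB x := .inl (.inl (i, α))

abbrev ofB (j : B) (β : SB) : SpV A B SA SB kA kB x := .inl (.inr (j, β))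

end SpV

namespace SpannerInstance

variable {A B SA SB : Type}

section Edges

variable {kA kB x : ℕ}

def pathEdgeS (q : A × Fin x × Fin (kA - 1)) : Sym2 (SpV A B SA SB kA kB x) :=
  s(SpV.s q.1 (Fin.castLE (Nat.sub_le kA 1) q.2.2) q.2.1,
    SpV.s q.1 ⟨q.2.2 + 1, Nat.add_lt_of_lt_sub q.2.2.isLt⟩ q.2.1)

def pathEdgeT (q : B × Fin x × Fin (kB - 1)) : Sym2 (SpV A B SA SB kA kB x) :=
  s(SpV.t q.1 (Fin.castLE (Nat.sub_le kB 1) q.2.2) q.2.1,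
    SpV.t q.1 ⟨q.2.2 + 1, Nat.add_lt_of_lt_sub q.2.2.isLt⟩ q.2.1)

def starEdge [NeZero kA] [NeZero kB] (p : Fin x) :
    (A × SA) ⊕ (B × SB) → Sym2 (SpV A B SA SB kA kB x)
  | .inl (i, α) => s(SpV.s i 0 p, SpV.ofA i α)
  | .inr (j, β) => s(SpV.ofB j β, SpV.t j 0 p)

def minRepEdge (q : (A × SA) × (B × SB)) : Sym2 (SpV A B SA SB kA kB x) :=
  s(SpV.ofA q.1.1 q.1.2, SpV.ofB q.2.1 q.2.2)

end Edges

variable (Et : Finset (A × B)) (π : A × B → Finset (SA × SB)) (kA kB x : ℕ) [NeZero kA] [NeZero kB]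
  (R : Finset ((A × SA) ⊕ (B × SB)))

def spannerEdges : Set (Sym2 (SpV A B SA SB kA kB x)) :=
  Set.range pathEdgeS ∪ Set.range pathEdgeT ∪
    (fun q => starEdge q.1 q.2) ''
      {q : Fin x × ((A × SA) ⊕ (B × SB)) | (q.1 : ℕ) = 0 ∨ q.2 ∈ R} ∪
    minRepEdge ''
      {q : (A × SA) × (B × SB) | (q.1.1, q.2.1) ∈ Et ∧ (q.1.2, q.2.2) ∈ π (q.1.1, q.2.1)}

def spanner : SimpleGraph (SpV A B SA SB kA kB x) :=
  SimpleGraph.fromEdgeSet (spannerEdges Et π kA kB x R)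

theorem spanner_le : spanner Et π kA kB x R ≤ spGraph Et π kA kB x := by
  rw [spanner, SimpleGraph.fromEdgeSet_le]
  rintro e ⟨he, -⟩
  simp only [spannerEdges, Set.mem_union, Set.mem_range, Set.mem_image, Set.mem_ofPred_eq] at he
  rcases he with (((⟨q, rfl⟩ | ⟨q, rfl⟩) | ⟨⟨p, (⟨i, α⟩ | ⟨j, β⟩)⟩, -, rfl⟩) | ⟨q, hq, rfl⟩) <;>
    simp_all [spGraph, spRel, pathEdgeS, pathEdgeT, starEdge, minRepEdge, Fin.ext_iff]

theorem ncard_edgeSet_spanner_le [Finite A] [Finite B] [Finite SA] [Finite SB] :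
    (spanner Et π kA kB x R).edgeSet.ncard ≤
      Nat.card A * x * (kA - 1) + Nat.card B * x * (kB - 1) +
        (Nat.card A * Nat.card SA + Nat.card B * Nat.card SB + x * R.card) +
        Nat.card A * Nat.card SA * (Nat.card B * Nat.card SB) := by
  have hstars : {q : Fin x × ((A × SA) ⊕ (B × SB)) | (q.1 : ℕ) = 0 ∨ q.2 ∈ R}.ncard ≤
      Nat.card A * Nat.card SA + Nat.card B * Nat.card SB + x * R.card := by
    rw [Set.ofPred_or]
    refine (Set.ncard_union_le _ _).trans (add_le_add ?_ (le_of_eq ?_))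
    · refine (Set.ncard_le_ncard_of_injOn Prod.snd (fun _ _ => Set.mem_univ _) ?_).trans ?_
      · rintro ⟨p, v⟩ hp ⟨p', v'⟩ hp' rfl
        simp_all [Fin.ext_iff]
      · simp [Nat.card_sum, Nat.card_prod]
    · rw [show {q : Fin x × ((A × SA) ⊕ (B × SB)) | q.2 ∈ R} = Set.univ ×ˢ (R : Set _) by
        ext; simp]
      simp [Set.ncard_prod]
  have hminRep :
      {q : (A × SA) × (B × SB) | (q.1.1, q.2.1) ∈ Et ∧ (q.1.2, q.2.2) ∈ π (q.1.1, q.2.1)}.ncard ≤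
        Nat.card A * Nat.card SA * (Nat.card B * Nat.card SB) :=
    (Set.ncard_le_card _).trans (by simp [Nat.card_prod])
  calc (spanner Et π kA kB x R).edgeSet.ncard ≤ (spannerEdges Et π kA kB x R).ncard := by
        rw [spanner, SimpleGraph.edgeSet_fromEdgeSet]
        exact Set.ncard_le_ncard Set.sdiff_subset (Set.toFinite _)
    _ ≤ _ := by
      refine (Set.ncard_union_le _ _).trans <| add_le_add ((Set.ncard_union_le _ _).trans <|
        add_le_add ((Set.ncard_union_le _ _).trans <| add_le_add ?_ ?_) ?_) ?_
      · exact (Set.ncard_range_le _).trans (by simp [Nat.card_prod, mul_assoc])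
      · exact (Set.ncard_range_le _).trans (by simp [Nat.card_prod, mul_assoc])
      · exact (Set.ncard_image_le (Set.toFinite _)).trans hstars
      · exact (Set.ncard_image_le (Set.toFinite _)).trans hminRep

variable {Et π kA kB x R}

theorem spanner_adj_s {i : A} {p : Fin x} {m m' : Fin kA} (h : (m' : ℕ) = m + 1) :
    (spanner Et π kA kB x R).Adj (SpV.s i m p) (SpV.s i m' p) := by
  refine (SimpleGraph.fromEdgeSet_adj _).2
    ⟨Or.inl (Or.inl (Or.inl ⟨(i, p, ⟨m, by omega⟩), ?_⟩)), ?_⟩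
  · simp [pathEdgeS, Fin.ext_iff, h]
  · simp [Fin.ext_iff, h]

theorem spanner_adj_t {j : B} {p : Fin x} {m m' : Fin kB} (h : (m' : ℕ) = m + 1) :
    (spanner Et π kA kB x R).Adj (SpV.t j m p) (SpV.t j m' p) := by
  refine (SimpleGraph.fromEdgeSet_adj _).2
    ⟨Or.inl (Or.inl (Or.inr ⟨(j, p, ⟨m, by omega⟩), ?_⟩)), ?_⟩
  · simp [pathEdgeT, Fin.ext_iff, h]
  · simp [Fin.ext_iff, h]

theorem spanner_adj_s_ofA {i : A} {α : SA} {p : Fin x} (h : (p : ℕ) = 0 ∨ .inl (i, α) ∈ R) :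
    (spanner Et π kA kB x R).Adj (SpV.s i 0 p) (SpV.ofA i α) :=
  (SimpleGraph.fromEdgeSet_adj _).2 ⟨Or.inl (Or.inr ⟨(p, .inl (i, α)), h, rfl⟩), by simp⟩

theorem spanner_adj_ofB_t {j : B} {β : SB} {p : Fin x} (h : (p : ℕ) = 0 ∨ .inr (j, β) ∈ R) :
    (spanner Et π kA kB x R).Adj (SpV.ofB j β) (SpV.t j 0 p) :=
  (SimpleGraph.fromEdgeSet_adj _).2 ⟨Or.inl (Or.inr ⟨(p, .inr (j, β)), h, rfl⟩), by simp⟩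

theorem spanner_adj_ofA_ofB {i : A} {j : B} {α : SA} {β : SB} (hij : (i, j) ∈ Et)
    (hαβ : (α, β) ∈ π (i, j)) : (spanner Et π kA kB x R).Adj (SpV.ofA i α) (SpV.ofB j β) :=
  (SimpleGraph.fromEdgeSet_adj _).2 ⟨Or.inr ⟨((i, α), (j, β)), ⟨hij, hαβ⟩, rfl⟩, by simp⟩

theorem exists_walk_s_zero (i : A) (p : Fin x) (m : Fin kA) :
    ∃ w : (spanner Et π kA kB x R).Walk (SpV.s i m p) (SpV.s i 0 p), w.length = m := by
  obtain ⟨m, hm⟩ := m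
  induction m with
  | zero => exact ⟨SimpleGraph.Walk.nil.copy rfl (by congr), rfl⟩
  | succ m ih =>
    obtain ⟨w, hw⟩ := ih (by omega)
    exact ⟨.cons (spanner_adj_s rfl).symm w, by simp [hw]⟩

theorem exists_walk_t_zero (j : B) (p : Fin x) (m : Fin kB) :
    ∃ w : (spanner Et π kA kB x R).Walk (SpV.t j m p) (SpV.t j 0 p), w.length = m := by
  obtain ⟨m, hm⟩ := m
  induction m with
  | zero => exact ⟨SimpleGraph.Walk.nil.copy rfl (by congr), rfl⟩
  | succ m ih =>
    obtain ⟨w, hw⟩ := ih (by omega)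
    exact ⟨.cons (spanner_adj_t rfl).symm w, by simp [hw]⟩

theorem exists_walk_s_ofA (hRA : Nonempty SA → ∀ i : A, ∃ α, .inl (i, α) ∈ R) (i : A) (α : SA)
    (p : Fin x) :
    ∃ w : (spanner Et π kA kB x R).Walk (SpV.s i 0 p) (SpV.ofA i α), w.length = 3 := by
  obtain ⟨α', hα'⟩ := hRA ⟨α⟩ i
  let p₀ : Fin x := ⟨0, p.pos⟩
  exact ⟨.cons (spanner_adj_s_ofA (.inr hα')) <|
    .cons (spanner_adj_s_ofA (p := p₀) (.inl rfl)).symm <|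
    .cons (spanner_adj_s_ofA (.inl rfl)) .nil, rfl⟩

theorem exists_walk_ofB_t (hRB : Nonempty SB → ∀ j : B, ∃ β, .inr (j, β) ∈ R) (j : B) (β : SB)
    (p : Fin x) :
    ∃ w : (spanner Et π kA kB x R).Walk (SpV.ofB j β) (SpV.t j 0 p), w.length = 3 := by
  obtain ⟨β', hβ'⟩ := hRB ⟨β⟩ j
  let p₀ : Fin x := ⟨0, p.pos⟩
  exact ⟨.cons (spanner_adj_ofB_t (p := p₀) (.inl rfl)) <|
    .cons (spanner_adj_ofB_t (.inl rfl)).symm <|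
    .cons (spanner_adj_ofB_t (.inr hβ')) .nil, rfl⟩

theorem exists_walk_s_t (hR : RepCover Et π R) {i : A} {j : B} (hij : (i, j) ∈ Et) (p : Fin x)
    (m : Fin kA) (m' : Fin kB) :
    ∃ w : (spanner Et π kA kB x R).Walk (SpV.s i m p) (SpV.t j m' p),
      w.length = (m : ℕ) + m' + 3 := by
  obtain ⟨α, β, hα, hβ, hαβ⟩ := hR (i, j) hij
  obtain ⟨w, hw⟩ := exists_walk_s_zero (Et := Et) (π := π) (kB := kB) (R := R) i p m
  obtain ⟨w', hw'⟩ := exists_walk_t_zero (Et := Et) (π := π) (kA := kA) (R := R) j p m'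
  refine ⟨w.append <| .cons (spanner_adj_s_ofA (.inr hα)) <|
    .cons (spanner_adj_ofA_ofB hij hαβ) <| .cons (spanner_adj_ofB_t (.inr hβ)) w'.reverse, ?_⟩
  simp [hw, hw']
  omega

variable {k : ℕ} (hR : RepCover Et π R) (hRA : Nonempty SA → ∀ i : A, ∃ α, .inl (i, α) ∈ R)
  (hRB : Nonempty SB → ∀ j : B, ∃ β, .inr (j, β) ∈ R) (hk : kA + kB + 1 ≤ k)
include hR hRA hRB hk

theorem exists_walk_of_spRel {u v : SpV A B SA SB kA kB x} (h : spRel Et π kA kB x u v) :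
    ∃ w : (spanner Et π kA kB x R).Walk u v, w.length ≤ k := by
  have := NeZero.pos kA
  have := NeZero.pos kB
  rcases u with (⟨i, α⟩ | ⟨j, β⟩) | (⟨i, m, p⟩ | ⟨j, m, p⟩) <;>
    rcases v with (⟨i', α'⟩ | ⟨j', β'⟩) | (⟨i', m', p'⟩ | ⟨j', m', p'⟩) <;>
    simp only [spRel] at h
  · exact ⟨(spanner_adj_ofA_ofB h.1 h.2).toWalk, by simp; omega⟩
  · obtain ⟨rfl, hm'⟩ := h
    obtain rfl := Fin.val_eq_zero_iff.1 hm'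
    obtain ⟨w, hw⟩ := exists_walk_ofB_t (kA := kA) (kB := kB) hRB j β p'
    exact ⟨w, by omega⟩
  · obtain ⟨rfl, hm⟩ := h
    obtain rfl := Fin.val_eq_zero_iff.1 hm
    obtain ⟨w, hw⟩ := exists_walk_s_ofA (kA := kA) (kB := kB) hRA i α' p
    exact ⟨w, by omega⟩
  · obtain ⟨rfl, rfl, hm⟩ := h
    exact ⟨(spanner_adj_s hm).toWalk, by simp; omega⟩
  · obtain ⟨hij, rfl, -, -⟩ := h
    obtain ⟨w, hw⟩ := exists_walk_s_t hR hij p m m'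
    exact ⟨w, by omega⟩
  · obtain ⟨rfl, rfl, hm⟩ := h
    exact ⟨(spanner_adj_t hm).toWalk, by simp; omega⟩

theorem isKSpanner_spanner : IsKSpanner (spanner Et π kA kB x R) (spGraph Et π kA kB x) k := by
  refine ⟨spanner_le Et π kA kB x R, fun u v huv => ?_⟩
  rw [spGraph, SimpleGraph.fromRel_adj] at huv
  rcases huv.2 with h | h
  · exact exists_walk_of_spRel hR hRA hRB hk h
  · obtain ⟨w, hw⟩ := exists_walk_of_spRel hR hRA hRB hk h
    exact ⟨w.reverse, by simpa⟩

end SpannerInstance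

theorem spanner_edge_budget {a b sa sb k kA kB x c r nt : ℕ} (hk : kA + kB + 1 = k) (hkA : 0 < kA)
    (hkB : 0 < kB) (hA : 2 * a = nt) (hB : 2 * b = nt) (hx : 1 ≤ x)
    (hxval : x = (a * sa + b * sb) ^ 2 / nt) (hc : nt ≤ c) (hr : r ≤ c + nt) :
    a * x * (kA - 1) + b * x * (kB - 1) + (a * sa + b * sb + x * r) + a * sa * (b * sb) ≤
      (k + 1) * x * c := by
  rw [hxval] at hx
  have hn := le_mul_div_of_one_le_sq_div hx
  have hsq := sq_le_two_mul_mul_div hx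
  have hprod := four_mul_le_sq_add (a * sa) (b * sb)
  rw [← hxval] at hn hsq
  obtain ⟨kA, rfl⟩ : ∃ m, kA = m + 1 := ⟨kA - 1, by omega⟩
  obtain ⟨kB, rfl⟩ : ∃ m, kB = m + 1 := ⟨kB - 1, by omega⟩
  obtain rfl : a = b := by omega
  subst hk hA
  simp only [Nat.add_sub_cancel]
  have hcx : 2 * a * x ≤ c * x := Nat.mul_le_mul_right x hc
  nlinarith [Nat.mul_le_mul_right kA hcx, Nat.mul_le_mul_right kB hcx, Nat.mul_le_mul_left x hr]

open SpannerInstance in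
theorem spanner_from_repCover_general {A B SA SB : Type}
    [Fintype A] [Fintype B] [Fintype SA] [Fintype SB]
    (Et : Finset (A × B)) (π : A × B → Finset (SA × SB))
    (k kA kB x n nt : ℕ) (hk : 3 ≤ k)
    (hkA : kA = (k - 1) / 2) (hkB : kB = (k - 1) - (k - 1) / 2)
    (hA : 2 * Fintype.card A = nt) (hB : 2 * Fintype.card B = nt)
    (hn : Fintype.card A * Fintype.card SA + Fintype.card B * Fintype.card SB = n)
    (hxval : x = n ^ 2 / nt) (hx : 1 ≤ x)
    (C : Finset ((A × SA) ⊕ (B × SB)))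
    (hC : RepCover Et π C) (hCcard : nt ≤ C.card) :
    ∃ H : SimpleGraph (SpV A B SA SB kA kB x),
      IsKSpanner H (spGraph Et π kA kB x) k ∧
      H.edgeSet.ncard ≤ (k + 1) * x * C.card := by
  classical
  have : NeZero kA := ⟨by omega⟩
  have : NeZero kB := ⟨by omega⟩
  obtain ⟨D, hD, hDA, hDB⟩ := exists_finset_meets_every_supervertex A B SA SB
  have hR : (C ∪ D).card ≤ C.card + nt := by
    have := Finset.card_union_le C D
    simp only [Nat.card_eq_fintype_card] at hD
    omega
  refine ⟨spanner Et π kA kB x (C ∪ D), isKSpanner_spanner (hC.mono Finset.subset_union_left)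
    (fun h i => (hDA h i).imp fun _ => (Finset.mem_union_right C ·))
    (fun h j => (hDB h j).imp fun _ => (Finset.mem_union_right C ·)) (by omega), ?_⟩
  refine (ncard_edgeSet_spanner_le Et π kA kB x (C ∪ D)).trans ?_
  simp only [Nat.card_eq_fintype_card]
  exact spanner_edge_budget (by omega) (NeZero.pos kA) (NeZero.pos kB) hA hB hx
    (by rw [hxval, hn]) hCcard hR

/-- with `x = n²/ñ`, every REP-cover `C` of the Min-Rep instance with
`|C| ≥ ñ` yields a `k`-spanner of the spanner instance `G'` with at most
`(k+1)·x·|C|` edges. -/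
theorem spanner_from_repCover {A B SA SB : Type}
    [Fintype A] [Fintype B] [Fintype SA] [Fintype SB]
    [DecidableEq A] [DecidableEq B] [DecidableEq SA] [DecidableEq SB]
    (Et : Finset (A × B)) (π : A × B → Finset (SA × SB))
    (k kA kB x n nt : ℕ) (hk : 3 ≤ k)
    (hkA : kA = (k - 1) / 2) (hkB : kB = (k - 1) - (k - 1) / 2)
    (hnt : Fintype.card A + Fintype.card B = nt)
    (hA : 2 * Fintype.card A = nt) (hB : 2 * Fintype.card B = nt)
    (hn : Fintype.card A * Fintype.card SA + Fintype.card B * Fintype.card SB = n)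
    (hxval : x = n ^ 2 / nt) (hx : 1 ≤ x)
    (hπ : ∀ f ∈ Et, (π f).Nonempty)
    (C : Finset ((A × SA) ⊕ (B × SB)))
    (hC : RepCover Et π C) (hCcard : nt ≤ C.card) :
    ∃ H : SimpleGraph (SpV A B SA SB kA kB x),
      IsKSpanner H (spGraph Et π kA kB x) k ∧
      H.edgeSet.ncard ≤ (k + 1) * x * C.card :=
  spanner_from_repCover_general Et π k kA kB x n nt hk hkA hkB hA hB hn hxval hx C hC hCcard
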